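/- Let a ∈ ℝ^m and b ∈ ℝ^n be unit vectors, let A₁ ∈ ℝ^{m×m} and B₁ ∈ ℝ^{n×n} satisfy A₁ a = 0, A₁ᵀ a = 0, B₁ b = 0 and B₁ᵀ b = 0, let σ₁ ≥ 0 satisfy σ₁ ‖A₁‖₂ ‖B₁‖₂ ≤ 1, and set T = σ₁ (A₁ ⊗ B₁) + (a aᵀ) ⊗ (b bᵀ). Then ‖T‖₂ = 1. -/

import Mathlib

/-! With `u = a ⊗ b` and `K = A₁ ⊗ B₁`, the hypotheses give `K u = 0` and `Kᵀ u = 0`, so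
`T = σ₁ K + u uᵀ` fixes `u` and maps `u^⊥` into itself through `σ₁ K`. Hence
`‖T x‖² = σ₁² ‖K y‖² + c²` for `x = y + c u`, `y ⊥ u`, and `‖T‖ = 1` as soon as
`σ₁ ‖K‖ ≤ 1`; this follows from `‖A ⊗ B‖ ≤ ‖A‖ ‖B‖`, which in turn comes from
`(A ⊗ B) vec X = vec (B X Aᵀ)`. -/

open Matrix Kronecker

/-- Spectral norm (ℓ²→ℓ² operator norm) of a real matrix. -/
noncomputable def specNorm {p q : Type*} [Fintype p] [Fintype q] [DecidableEq q]
    (S : Matrix p q ℝ) : ℝ :=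
  ‖LinearMap.toContinuousLinearMap (Matrix.toEuclideanLin S)‖

section SpecNorm

variable {ι κ ν : Type*} [Fintype ι] [Fintype κ] [DecidableEq κ]

lemma specNorm_nonneg (S : Matrix ι κ ℝ) : 0 ≤ specNorm S := norm_nonneg _

omit [DecidableEq κ] in
lemma norm_toLp_sq_eq_dotProduct (v : κ → ℝ) : ‖WithLp.toLp 2 v‖ ^ 2 = v ⬝ᵥ v := by
  rw [← real_inner_self_eq_norm_sq, EuclideanSpace.inner_toLp_toLp, star_trivial]

lemma mulVec_dotProduct_mulVec_le (S : Matrix ι κ ℝ) (v : κ → ℝ) :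
    S *ᵥ v ⬝ᵥ S *ᵥ v ≤ specNorm S ^ 2 * (v ⬝ᵥ v) := by
  rw [← norm_toLp_sq_eq_dotProduct, ← norm_toLp_sq_eq_dotProduct, ← mul_pow]
  exact pow_le_pow_left₀ (norm_nonneg _)
    ((LinearMap.toContinuousLinearMap (toEuclideanLin S)).le_opNorm (WithLp.toLp 2 v)) 2

lemma specNorm_le_of_forall_dotProduct_le (S : Matrix ι κ ℝ) {c : ℝ} (hc : 0 ≤ c)
    (h : ∀ v, S *ᵥ v ⬝ᵥ S *ᵥ v ≤ c ^ 2 * (v ⬝ᵥ v)) : specNorm S ≤ c :=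
  ContinuousLinearMap.opNorm_le_bound _ hc fun x => by
    have hx := h (WithLp.ofLp x)
    rw [← norm_toLp_sq_eq_dotProduct, ← norm_toLp_sq_eq_dotProduct, ← mul_pow,
      WithLp.toLp_ofLp] at hx
    exact (pow_le_pow_iff_left₀ (norm_nonneg _) (by positivity) two_ne_zero).mp hx

lemma one_le_specNorm_of_mulVec_eq_self {S : Matrix κ κ ℝ} {u : κ → ℝ} (hu : u ⬝ᵥ u = 1)
    (hSu : S *ᵥ u = u) : 1 ≤ specNorm S := by
  have h := mulVec_dotProduct_mulVec_le S u
  rw [hSu, hu, mul_one] at h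
  nlinarith [specNorm_nonneg S]

omit [DecidableEq κ] in
lemma vec_transpose_dotProduct_vec_transpose (M : Matrix ι κ ℝ) :
    vec Mᵀ ⬝ᵥ vec Mᵀ = vec M ⬝ᵥ vec M := by
  simp only [dotProduct, vec, Fintype.sum_prod_type, transpose_apply]
  exact Finset.sum_comm

lemma vec_mul_dotProduct_vec_mul_le [Fintype ν] (S : Matrix ι κ ℝ) (M : Matrix κ ν ℝ) :
    vec (S * M) ⬝ᵥ vec (S * M) ≤ specNorm S ^ 2 * (vec M ⬝ᵥ vec M) := by
  have hcol : ∀ j, (fun i => (S * M) i j) = S *ᵥ fun k => M k j := fun j => by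
    ext i; simp [mul_apply, mulVec, dotProduct]
  simp only [dotProduct, vec, Fintype.sum_prod_type, Finset.mul_sum]
  refine Finset.sum_le_sum fun j _ => ?_
  simpa only [← hcol, dotProduct, Finset.mul_sum] using
    mulVec_dotProduct_mulVec_le S fun k => M k j

lemma specNorm_kronecker_le [DecidableEq ι] (A : Matrix ι ι ℝ) (B : Matrix κ κ ℝ) :
    specNorm (A ⊗ₖ B) ≤ specNorm A * specNorm B := by
  refine specNorm_le_of_forall_dotProduct_le _ (mul_nonneg (specNorm_nonneg A) (specNorm_nonneg B))
    fun y => ?_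
  obtain ⟨X, rfl⟩ : ∃ X : Matrix κ ι ℝ, vec X = y := vec_bijective.surjective y
  rw [kronecker_mulVec_vec, Matrix.mul_assoc]
  calc vec (B * (X * Aᵀ)) ⬝ᵥ vec (B * (X * Aᵀ))
      ≤ specNorm B ^ 2 * (vec (X * Aᵀ) ⬝ᵥ vec (X * Aᵀ)) := vec_mul_dotProduct_vec_mul_le B _
    _ = specNorm B ^ 2 * (vec (A * Xᵀ) ⬝ᵥ vec (A * Xᵀ)) := by
      rw [← vec_transpose_dotProduct_vec_transpose (A * Xᵀ), transpose_mul, transpose_transpose]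
    _ ≤ specNorm B ^ 2 * (specNorm A ^ 2 * (vec Xᵀ ⬝ᵥ vec Xᵀ)) := by
      gcongr; exact vec_mul_dotProduct_vec_mul_le A _
    _ = (specNorm A * specNorm B) ^ 2 * (vec X ⬝ᵥ vec X) := by
      rw [vec_transpose_dotProduct_vec_transpose]; ring

end SpecNorm

section RankOnePerturbation

variable {κ : Type*} [Fintype κ] [DecidableEq κ]

theorem specNorm_smul_add_vecMulVec_self_eq_one {K : Matrix κ κ ℝ} {u : κ → ℝ} {σ : ℝ}
    (hu : u ⬝ᵥ u = 1) (hKu : K *ᵥ u = 0) (hKtu : Kᵀ *ᵥ u = 0) (hσ : 0 ≤ σ)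
    (hσK : σ * specNorm K ≤ 1) :
    specNorm (σ • K + vecMulVec u u) = 1 := by
  have hPx : ∀ x, vecMulVec u u *ᵥ x = (u ⬝ᵥ x) • u := fun x => by
    rw [vecMulVec_mulVec, op_smul_eq_smul]
  refine le_antisymm ?_ (one_le_specNorm_of_mulVec_eq_self hu ?_)
  · refine specNorm_le_of_forall_dotProduct_le _ zero_le_one fun x => ?_
    set c := u ⬝ᵥ x
    set y := x - c • u
    have hKx : K *ᵥ x = K *ᵥ y := by
      rw [mulVec_sub, mulVec_smul, hKu, smul_zero, sub_zero]
    have hKx_orth : K *ᵥ x ⬝ᵥ u = 0 := by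
      rw [dotProduct_comm, dotProduct_mulVec, ← mulVec_transpose, hKtu, zero_dotProduct]
    have hy : y ⬝ᵥ y = x ⬝ᵥ x - c ^ 2 := by
      simp only [y, sub_dotProduct, dotProduct_sub, smul_dotProduct, dotProduct_smul, hu,
        dotProduct_comm x u, smul_eq_mul]
      ring
    have hy_nonneg : 0 ≤ y ⬝ᵥ y := by
      simpa only [star_trivial] using dotProduct_self_star_nonneg y
    have hσK_sq : σ ^ 2 * specNorm K ^ 2 ≤ 1 := by
      rw [← mul_pow]
      exact pow_le_one₀ (mul_nonneg hσ (specNorm_nonneg K)) hσK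
    calc (σ • K + vecMulVec u u) *ᵥ x ⬝ᵥ (σ • K + vecMulVec u u) *ᵥ x
        = σ ^ 2 * (K *ᵥ x ⬝ᵥ K *ᵥ x) + c ^ 2 := by
          rw [add_mulVec, smul_mulVec, hPx]
          simp only [add_dotProduct, dotProduct_add, smul_dotProduct, dotProduct_smul, hu,
            hKx_orth, dotProduct_comm u (K *ᵥ x), smul_eq_mul]
          ring
      _ ≤ σ ^ 2 * (specNorm K ^ 2 * (y ⬝ᵥ y)) + c ^ 2 := by
          rw [hKx]; gcongr; exact mulVec_dotProduct_mulVec_le K y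
      _ ≤ 1 ^ 2 * (x ⬝ᵥ x) := by
          nlinarith [mul_le_mul_of_nonneg_right hσK_sq hy_nonneg]
  · rw [add_mulVec, smul_mulVec, hKu, smul_zero, zero_add, hPx, hu, one_smul]

end RankOnePerturbation

section KroneckerVec

variable {R ι κ : Type*} [CommSemiring R]

def kroneckerVec (v : ι → R) (w : κ → R) : ι × κ → R := fun x => v x.1 * w x.2

@[simp]
lemma zero_kroneckerVec (w : κ → R) : kroneckerVec (0 : ι → R) w = 0 := by
  ext; simp [kroneckerVec]

lemma vecMulVec_kronecker_vecMulVec (v v' : ι → R) (w w' : κ → R) :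
    vecMulVec v v' ⊗ₖ vecMulVec w w' = vecMulVec (kroneckerVec v w) (kroneckerVec v' w') := by
  ext; simp only [kroneckerMap_apply, vecMulVec_apply, kroneckerVec]; ring

variable [Fintype ι] [Fintype κ]

lemma kroneckerVec_dotProduct_kroneckerVec (v v' : ι → R) (w w' : κ → R) :
    kroneckerVec v w ⬝ᵥ kroneckerVec v' w' = (v ⬝ᵥ v') * (w ⬝ᵥ w') := by
  simp only [dotProduct, kroneckerVec, Fintype.sum_prod_type, Finset.sum_mul_sum]
  exact Finset.sum_congr rfl fun _ _ => Finset.sum_congr rfl fun _ _ => by ring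

lemma kronecker_mulVec_kroneckerVec {l m : Type*} (A : Matrix l ι R) (B : Matrix m κ R)
    (v : ι → R) (w : κ → R) :
    (A ⊗ₖ B) *ᵥ kroneckerVec v w = kroneckerVec (A *ᵥ v) (B *ᵥ w) := by
  ext ⟨i, p⟩
  simp only [mulVec, dotProduct, kroneckerMap_apply, kroneckerVec, Fintype.sum_prod_type,
    Finset.sum_mul_sum]
  exact Finset.sum_congr rfl fun _ _ => Finset.sum_congr rfl fun _ _ => by ring

end KroneckerVec

theorem specNorm_T_eq_one_general (m n : ℕ)
    (a : Fin m → ℝ) (b : Fin n → ℝ)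
    (ha : Real.sqrt (∑ i, a i ^ 2) = 1) (hb : Real.sqrt (∑ p, b p ^ 2) = 1)
    (A₁ : Matrix (Fin m) (Fin m) ℝ) (B₁ : Matrix (Fin n) (Fin n) ℝ)
    (hA : A₁ *ᵥ a = 0) (hAt : A₁ᵀ *ᵥ a = 0)
    (σ₁ : ℝ) (hσ : 0 ≤ σ₁) (hbound : σ₁ * specNorm A₁ * specNorm B₁ ≤ 1)
    (T : Matrix (Fin m × Fin n) (Fin m × Fin n) ℝ)
    (hT : T = σ₁ • (A₁ ⊗ₖ B₁) + (Matrix.vecMulVec a a) ⊗ₖ (Matrix.vecMulVec b b)) :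
    specNorm T = 1 := by
  have hunit : ∀ {k : ℕ} (v : Fin k → ℝ), Real.sqrt (∑ i, v i ^ 2) = 1 → v ⬝ᵥ v = 1 :=
    fun v hv => by simpa only [dotProduct, sq] using Real.sqrt_eq_one.mp hv
  rw [hT, vecMulVec_kronecker_vecMulVec]
  refine specNorm_smul_add_vecMulVec_self_eq_one ?_ ?_ ?_ hσ ?_
  · rw [kroneckerVec_dotProduct_kroneckerVec, hunit a ha, hunit b hb, one_mul]
  · rw [kronecker_mulVec_kroneckerVec, hA, zero_kroneckerVec]
  · rw [← kroneckerMap_transpose, kronecker_mulVec_kroneckerVec, hAt, zero_kroneckerVec]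
  · calc σ₁ * specNorm (A₁ ⊗ₖ B₁) ≤ σ₁ * (specNorm A₁ * specNorm B₁) :=
          mul_le_mul_of_nonneg_left (specNorm_kronecker_le A₁ B₁) hσ
      _ ≤ 1 := by rwa [← mul_assoc]

/-- For unit vectors `a`, `b` with `A₁ a = 0`, `A₁ᵀ a = 0`, `B₁ b = 0`, `B₁ᵀ b = 0`,
and `σ₁ ≥ 0` with `σ₁ ‖A₁‖₂ ‖B₁‖₂ ≤ 1`, the operator
`T = σ₁ (A₁ ⊗ B₁) + (a aᵀ) ⊗ (b bᵀ)` has spectral norm `1`. -/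
theorem specNorm_T_eq_one (m n : ℕ) (hm : 0 < m) (hn : 0 < n)
    (a : Fin m → ℝ) (b : Fin n → ℝ)
    (ha : Real.sqrt (∑ i, a i ^ 2) = 1) (hb : Real.sqrt (∑ p, b p ^ 2) = 1)
    (A₁ : Matrix (Fin m) (Fin m) ℝ) (B₁ : Matrix (Fin n) (Fin n) ℝ)
    (hA : A₁ *ᵥ a = 0) (hAt : A₁ᵀ *ᵥ a = 0) (hB : B₁ *ᵥ b = 0) (hBt : B₁ᵀ *ᵥ b = 0)
    (σ₁ : ℝ) (hσ : 0 ≤ σ₁) (hbound : σ₁ * specNorm A₁ * specNorm B₁ ≤ 1)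
    (T : Matrix (Fin m × Fin n) (Fin m × Fin n) ℝ)
    (hT : T = σ₁ • (A₁ ⊗ₖ B₁) + (Matrix.vecMulVec a a) ⊗ₖ (Matrix.vecMulVec b b)) :
    specNorm T = 1 :=
  specNorm_T_eq_one_general m n a b ha hb A₁ B₁ hA hAt σ₁ hσ hbound T hT
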